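/- (Strong duality for the square loss.) For β̄ ∈ ℝᵖ and ᾱ ∈ ℝⁿ, the pair satisfies [ᾱ maximizes D over ℝⁿ, i.e. D(α) ≤ D(ᾱ) for all α ∈ ℝⁿ, and P(β̄) = D(ᾱ)] if and only if the following three conditions hold: (a) β̄ minimizes P over ℝᵖ; (b) ᾱ = Xβ̄ − y; (c) the link condition holds: for every j ∈ {1,…,p}, either β̄_j = 0 and |η_j(ᾱ)| ≤ η₀, or β̄_j = sign(η_j(ᾱ))·(|η_j(ᾱ)| − λ₁/(2λ₂)) and |η_j(ᾱ)| ≥ η₀. -/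

import Mathlib

/-!
Expanding the square, `P β - D α = ½‖y - Xβ + α‖² + ∑ⱼ (pen βⱼ + τⱼ βⱼ - Φ τⱼ)` with
`τⱼ = x₍·ⱼ₎ᵀα` and `pen b = λ₁|b| + λ₂b² + λ₀[b ≠ 0]`. Since `Φ τ = min_b (pen b + τ b)`, every
summand is nonnegative: weak duality holds, and `P β = D α` exactly when `α = Xβ - y` and every `βⱼ`
attains that minimum. Divided by `λ₂`, the scalar problem is to minimize
`b² + 2κ|b| + w²[b ≠ 0] - 2ηb` with `κ = λ₁/(2λ₂)`, `w² = λ₀/λ₂` and `η = -τ/(2λ₂)`; its minimizers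
are `0` when `|η| ≤ w + κ` and the soft threshold `sign η (|η| - κ)` when `|η| ≥ w + κ`, which is
the link condition. By weak duality a pair with zero gap is optimal on both sides, whence (a).
-/

namespace L0L1L2

noncomputable def normPenalty (κ w b : ℝ) : ℝ :=
  b ^ 2 + 2 * κ * |b| + w ^ 2 * if b = 0 then 0 else 1

noncomputable def normPenaltyMin (κ w η : ℝ) : ℝ :=
  if w + κ < |η| then w ^ 2 - (|η| - κ) ^ 2 else 0

def IsThreshold (κ w η b : ℝ) : Prop :=
  (b = 0 ∧ |η| ≤ w + κ) ∨ (b = Real.sign η * (|η| - κ) ∧ w + κ ≤ |η|)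

variable {κ w η b : ℝ}

lemma normPenaltyMin_eq_zero_iff (hw : 0 ≤ w) : normPenaltyMin κ w η = 0 ↔ |η| ≤ w + κ := by
  unfold normPenaltyMin
  split_ifs with h
  · refine iff_of_false (fun h0 => ?_) h.not_ge
    nlinarith
  · simpa using h

lemma normPenaltyMin_nonpos (hw : 0 ≤ w) : normPenaltyMin κ w η ≤ 0 := by
  unfold normPenaltyMin
  split_ifs with h
  · nlinarith
  · rfl

lemma normPenaltyMin_of_le (h : w + κ ≤ |η|) :
    normPenaltyMin κ w η = w ^ 2 - (|η| - κ) ^ 2 := by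
  unfold normPenaltyMin
  split_ifs with h'
  · rfl
  · rw [le_antisymm (not_lt.1 h') h]; ring

lemma normPenalty_zero_sub_mul : normPenalty κ w 0 - 2 * η * 0 = 0 := by
  simp [normPenalty]

lemma normPenalty_sub_mul_eq (hb : b ≠ 0) :
    normPenalty κ w b - 2 * η * b =
      (|b| - (|η| - κ)) ^ 2 + (w ^ 2 - (|η| - κ) ^ 2) + 2 * (|η| * |b| - η * b) := by
  rw [normPenalty, if_neg hb, ← sq_abs b]
  ring

lemma mul_le_abs_mul_abs (η b : ℝ) : η * b ≤ |η| * |b| :=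
  abs_mul η b ▸ le_abs_self _

lemma normPenalty_sub_mul_pos (hη : |η| < w + κ) (hb : b ≠ 0) :
    0 < normPenalty κ w b - 2 * η * b := by
  have hr : 0 < |b| := abs_pos.2 hb
  rw [normPenalty_sub_mul_eq hb]
  nlinarith [sq_nonneg (|b| - w), mul_le_abs_mul_abs η b]

theorem normPenaltyMin_le (hw : 0 ≤ w) :
    normPenaltyMin κ w η ≤ normPenalty κ w b - 2 * η * b := by
  rcases eq_or_ne b 0 with rfl | hb
  · rw [normPenalty_zero_sub_mul]; exact normPenaltyMin_nonpos hw
  rcases le_or_gt (w + κ) |η| with h | h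
  · rw [normPenaltyMin_of_le h, normPenalty_sub_mul_eq hb]
    nlinarith [sq_nonneg (|b| - (|η| - κ)), mul_le_abs_mul_abs η b]
  · exact (normPenaltyMin_nonpos hw).trans (normPenalty_sub_mul_pos h hb).le

lemma eq_sign_mul_iff {a : ℝ} (hη : η ≠ 0) (ha : 0 ≤ a) :
    b = Real.sign η * a ↔ |b| = a ∧ η * b = |η| * |b| := by
  rcases hη.lt_or_gt with h | h
  · rw [Real.sign_of_neg h, abs_of_neg h]
    constructor
    · rintro rfl
      simp [abs_of_nonneg ha]
    · rintro ⟨rfl, hηb⟩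
      have : η * (b + |b|) = 0 := by linarith
      linarith [(mul_eq_zero.1 this).resolve_left h.ne]
  · rw [Real.sign_of_pos h, abs_of_pos h]
    constructor
    · rintro rfl
      simp [abs_of_nonneg ha]
    · rintro ⟨rfl, hηb⟩
      have : η * (b - |b|) = 0 := by linarith
      linarith [(mul_eq_zero.1 this).resolve_left h.ne']

theorem normPenalty_sub_mul_eq_normPenaltyMin_iff (hκ : 0 ≤ κ) (hw : 0 < w) :
    normPenalty κ w b - 2 * η * b = normPenaltyMin κ w η ↔ IsThreshold κ w η b := by
  have hκw : 0 < w + κ := by linarith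
  unfold IsThreshold
  rcases eq_or_ne b 0 with rfl | hb
  · rw [normPenalty_zero_sub_mul, eq_comm, normPenaltyMin_eq_zero_iff hw.le]
    refine ⟨fun h => Or.inl ⟨rfl, h⟩, ?_⟩
    rintro (⟨-, h⟩ | ⟨h0, h⟩)
    · exact h
    · have hη0 : η ≠ 0 := abs_pos.1 (hκw.trans_le h)
      exact absurd h0.symm (mul_ne_zero (Real.sign_eq_zero_iff.not.2 hη0) (by linarith))
  rcases le_or_gt (w + κ) |η| with h | h
  · have hη0 : η ≠ 0 := abs_pos.1 (hκw.trans_le h)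
    rw [normPenaltyMin_of_le h, normPenalty_sub_mul_eq hb, eq_sign_mul_iff hη0 (by linarith)]
    simp only [hb, false_and, false_or, h, and_true]
    constructor
    · intro heq
      have hηb := mul_le_abs_mul_abs η b
      have hsq : (|b| - (|η| - κ)) ^ 2 = 0 := by nlinarith [sq_nonneg (|b| - (|η| - κ))]
      exact ⟨sub_eq_zero.1 (pow_eq_zero_iff two_ne_zero |>.1 hsq), by nlinarith⟩
    · rintro ⟨h1, h2⟩
      rw [h2, h1]
      ring
  · rw [(normPenaltyMin_eq_zero_iff hw.le).2 h.le]
    refine iff_of_false (normPenalty_sub_mul_pos h hb).ne' ?_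
    rintro (⟨hb0, -⟩ | ⟨-, h'⟩)
    · exact hb hb0
    · linarith

noncomputable def penalty (l0 l1 l2 b : ℝ) : ℝ :=
  l1 * |b| + l2 * b ^ 2 + l0 * if b = 0 then 0 else 1

noncomputable def dualPenalty (l0 l1 l2 t : ℝ) : ℝ :=
  if 2 * Real.sqrt (l0 * l2) + l1 < |t| then l0 - (|t| - l1) ^ 2 / (4 * l2) else 0

variable {l0 l1 l2 : ℝ}

lemma sqrt_div_add_div_eq (hl2 : 0 < l2) :
    √(l0 * l2) / l2 + l1 / (2 * l2) = (2 * √(l0 * l2) + l1) / (2 * l2) := by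
  field_simp

lemma penalty_add_mul_eq (hl0 : 0 ≤ l0) (hl2 : 0 < l2) (t b : ℝ) :
    penalty l0 l1 l2 b + t * b =
      l2 * (normPenalty (l1 / (2 * l2)) (√(l0 * l2) / l2) b - 2 * (-t / (2 * l2)) * b) := by
  have hs : √(l0 * l2) ^ 2 = l0 * l2 := Real.sq_sqrt (by positivity)
  unfold penalty normPenalty
  rw [div_pow, hs]
  field_simp
  ring

lemma dualPenalty_eq (hl0 : 0 ≤ l0) (hl2 : 0 < l2) (t : ℝ) :
    dualPenalty l0 l1 l2 t =
      l2 * normPenaltyMin (l1 / (2 * l2)) (√(l0 * l2) / l2) (-t / (2 * l2)) := by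
  have hs : √(l0 * l2) ^ 2 = l0 * l2 := Real.sq_sqrt (by positivity)
  have habs : |-t / (2 * l2)| = |t| / (2 * l2) := by
    rw [abs_div, abs_neg, abs_of_pos (by positivity : (0 : ℝ) < 2 * l2)]
  unfold dualPenalty normPenaltyMin
  rw [habs, sqrt_div_add_div_eq hl2]
  simp only [div_lt_div_iff_of_pos_right (by positivity : (0 : ℝ) < 2 * l2)]
  split_ifs
  · rw [div_pow, hs]
    field_simp
    ring
  · simp

lemma dualPenalty_le_penalty_add_mul (hl0 : 0 ≤ l0) (hl2 : 0 < l2) (t b : ℝ) :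
    dualPenalty l0 l1 l2 t ≤ penalty l0 l1 l2 b + t * b := by
  rw [dualPenalty_eq hl0 hl2, penalty_add_mul_eq hl0 hl2]
  exact mul_le_mul_of_nonneg_left (normPenaltyMin_le (by positivity)) hl2.le

lemma penalty_add_mul_eq_dualPenalty_iff (hl0 : 0 < l0) (hl1 : 0 ≤ l1) (hl2 : 0 < l2)
    (t b : ℝ) :
    penalty l0 l1 l2 b + t * b = dualPenalty l0 l1 l2 t ↔
      (b = 0 ∧ |-t / (2 * l2)| ≤ (2 * √(l0 * l2) + l1) / (2 * l2)) ∨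
      (b = Real.sign (-t / (2 * l2)) * (|-t / (2 * l2)| - l1 / (2 * l2)) ∧
        (2 * √(l0 * l2) + l1) / (2 * l2) ≤ |-t / (2 * l2)|) := by
  rw [dualPenalty_eq hl0.le hl2, penalty_add_mul_eq hl0.le hl2, mul_right_inj' hl2.ne',
    normPenalty_sub_mul_eq_normPenaltyMin_iff (by positivity) (by positivity), IsThreshold,
    sqrt_div_add_div_eq hl2]

lemma sum_penalty {k : Type*} [Fintype k] (β : k → ℝ) :
    ∑ j, penalty l0 l1 l2 (β j) =
      l1 * ∑ j, |β j| + l2 * ∑ j, β j ^ 2 +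
        l0 * ((Finset.univ.filter fun j => β j ≠ 0).card : ℝ) := by
  simp only [penalty, Finset.sum_add_distrib, ← Finset.mul_sum, Finset.card_filter]
  push_cast
  simp only [ite_not]

end L0L1L2

section Duality

variable {m k : Type*} [Fintype m] [Fintype k]

noncomputable def primalObjective (pen : ℝ → ℝ) (X : Matrix m k ℝ) (y : m → ℝ) (β : k → ℝ) :
    ℝ :=
  (1 / 2) * ∑ i, (y i - ∑ j, X i j * β j) ^ 2 + ∑ j, pen (β j)

noncomputable def dualObjective (Φ : ℝ → ℝ) (X : Matrix m k ℝ) (y : m → ℝ) (α : m → ℝ) :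
    ℝ :=
  -(1 / 2) * ∑ i, α i ^ 2 - ∑ i, y i * α i + ∑ j, Φ (∑ i, X i j * α i)

variable (pen Φ : ℝ → ℝ) (X : Matrix m k ℝ) (y : m → ℝ)

lemma primalObjective_sub_dualObjective (β : k → ℝ) (α : m → ℝ) :
    primalObjective pen X y β - dualObjective Φ X y α =
      (1 / 2) * ∑ i, (y i - ∑ j, X i j * β j + α i) ^ 2 +
        ∑ j, (pen (β j) + (∑ i, X i j * α i) * β j - Φ (∑ i, X i j * α i)) := by
  have hswap : ∑ i, (∑ j, X i j * β j) * α i = ∑ j, (∑ i, X i j * α i) * β j := by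
    simp only [Finset.sum_mul]
    rw [Finset.sum_comm]
    exact Finset.sum_congr rfl fun j _ => Finset.sum_congr rfl fun i _ => by ring
  have hsq : ∑ i, (y i - ∑ j, X i j * β j + α i) ^ 2 =
      ∑ i, (y i - ∑ j, X i j * β j) ^ 2 + 2 * ∑ i, y i * α i
        - 2 * ∑ i, (∑ j, X i j * β j) * α i + ∑ i, α i ^ 2 := by
    simp only [Finset.mul_sum, ← Finset.sum_add_distrib, ← Finset.sum_sub_distrib]
    exact Finset.sum_congr rfl fun i _ => by ring
  simp only [primalObjective, dualObjective, Finset.sum_sub_distrib, Finset.sum_add_distrib]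
  rw [hsq, hswap]
  ring

variable {pen Φ}

lemma dualObjective_le_primalObjective (hFY : ∀ t b, Φ t ≤ pen b + t * b)
    (α : m → ℝ) (β : k → ℝ) : dualObjective Φ X y α ≤ primalObjective pen X y β := by
  have := primalObjective_sub_dualObjective pen Φ X y β α
  have h1 : 0 ≤ ∑ i, (y i - ∑ j, X i j * β j + α i) ^ 2 :=
    Finset.sum_nonneg fun i _ => sq_nonneg _
  have h2 : 0 ≤ ∑ j, (pen (β j) + (∑ i, X i j * α i) * β j - Φ (∑ i, X i j * α i)) :=
    Finset.sum_nonneg fun j _ => sub_nonneg.2 (hFY _ _)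
  linarith

lemma primalObjective_eq_dualObjective_iff (hFY : ∀ t b, Φ t ≤ pen b + t * b)
    (β : k → ℝ) (α : m → ℝ) :
    primalObjective pen X y β = dualObjective Φ X y α ↔
      (∀ i, α i = ∑ j, X i j * β j - y i) ∧
        ∀ j, pen (β j) + (∑ i, X i j * α i) * β j = Φ (∑ i, X i j * α i) := by
  rw [← sub_eq_zero, primalObjective_sub_dualObjective,
    add_eq_zero_iff_of_nonneg (by positivity)
      (Finset.sum_nonneg fun j _ => sub_nonneg.2 (hFY _ _)),
    mul_eq_zero, Finset.sum_eq_zero_iff_of_nonneg (fun i _ => sq_nonneg _),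
    Finset.sum_eq_zero_iff_of_nonneg (fun j _ => sub_nonneg.2 (hFY _ _))]
  simp only [Finset.mem_univ, forall_const, one_div, inv_eq_zero, OfNat.ofNat_ne_zero, false_or,
    sq_eq_zero_iff, sub_eq_zero]
  refine and_congr (forall_congr' fun i => ?_) Iff.rfl
  constructor <;> intro h <;> linarith

end Duality

/-- (Strong duality for the square loss.) [ᾱ maximizes D and
P(β̄) = D(ᾱ)] iff (a) β̄ minimizes P; (b) ᾱ = Xβ̄ − y; (c) the link condition. -/
theorem statement_11 (l0 l1 l2 : ℝ) (hl0 : 0 < l0) (hl1 : 0 < l1) (hl2 : 0 < l2)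
    (n p : ℕ) (X : Matrix (Fin n) (Fin p) ℝ) (y : Fin n → ℝ)
    (Φ : ℝ → ℝ)
    (hΦ : ∀ t : ℝ, Φ t =
      if 2 * Real.sqrt (l0 * l2) + l1 < |t| then l0 - (|t| - l1) ^ 2 / (4 * l2)
      else 0)
    (P : (Fin p → ℝ) → ℝ)
    (hP : ∀ β : Fin p → ℝ, P β =
      (1 / 2) * (∑ i, (y i - ∑ j, X i j * β j) ^ 2)
        + l1 * (∑ j, |β j|) + l2 * (∑ j, (β j) ^ 2)
        + l0 * ((Finset.univ.filter fun j => β j ≠ 0).card : ℝ))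
    (D : (Fin n → ℝ) → ℝ)
    (hD : ∀ α : Fin n → ℝ, D α =
      -(1 / 2) * (∑ i, (α i) ^ 2) - (∑ i, y i * α i)
        + ∑ j, Φ (∑ i, X i j * α i))
    (η : (Fin n → ℝ) → Fin p → ℝ)
    (hη : ∀ (α : Fin n → ℝ) (j : Fin p), η α j = -(∑ i, X i j * α i) / (2 * l2))
    (βbar : Fin p → ℝ) (αbar : Fin n → ℝ) :
    ((∀ α : Fin n → ℝ, D α ≤ D αbar) ∧ P βbar = D αbar) ↔
      ((∀ β : Fin p → ℝ, P βbar ≤ P β) ∧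
       (∀ i, αbar i = (∑ j, X i j * βbar j) - y i) ∧
       (∀ j, (βbar j = 0 ∧ |η αbar j| ≤ (2 * Real.sqrt (l0 * l2) + l1) / (2 * l2)) ∨
         (βbar j = Real.sign (η αbar j) * (|η αbar j| - l1 / (2 * l2)) ∧
           (2 * Real.sqrt (l0 * l2) + l1) / (2 * l2) ≤ |η αbar j|))) := by
  obtain rfl : P = primalObjective (L0L1L2.penalty l0 l1 l2) X y :=
    funext fun β => by rw [hP, primalObjective, L0L1L2.sum_penalty]; ring
  obtain rfl : Φ = L0L1L2.dualPenalty l0 l1 l2 := funext hΦ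
  obtain rfl : D = dualObjective (L0L1L2.dualPenalty l0 l1 l2) X y := funext hD
  have hFY := L0L1L2.dualPenalty_le_penalty_add_mul (l1 := l1) hl0.le hl2
  have hweak := dualObjective_le_primalObjective X y hFY
  have hlink (j : Fin p) := hη αbar j ▸
    L0L1L2.penalty_add_mul_eq_dualPenalty_iff hl0 hl1.le hl2 (∑ i, X i j * αbar i) (βbar j)
  rw [← forall_congr' hlink, ← primalObjective_eq_dualObjective_iff X y hFY]
  exact ⟨fun ⟨_, h⟩ => ⟨fun β => h.trans_le (hweak _ _), h⟩,
    fun ⟨_, h⟩ => ⟨fun α => (hweak _ _).trans h.le, h⟩⟩
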